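/- For every w ∈ B_1, the map t ↦ g^br_t(w) from [0,1] to [0,1] is non-decreasing and right-continuous. -/

import Mathlib

open Set Filter MeasureTheory Topology UniformConvergence

noncomputable section

/-- Supremum of `f` over the interval `[s,t]`. -/
def intervalMaxOn (f : ℝ → ℝ) (s t : ℝ) : ℝ := sSup (f '' Set.Icc s t)

/-- Infimum of `f` over the interval `[s,t]`. -/
def intervalMinOn (f : ℝ → ℝ) (s t : ℝ) : ℝ := sInf (f '' Set.Icc s t)

/-- `ρ(w)`: the first time in `[0,a]` at which `f` attains its maximum over `[0,a]`. -/
def rho (a : ℝ) (f : ℝ → ℝ) : ℝ := sInf {s | s ∈ Set.Icc 0 a ∧ f s = intervalMaxOn f 0 a}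

/-- membership in `B_a`: continuous bridges of length `a`. -/
def IsBridge (a : ℝ) (f : ℝ → ℝ) : Prop :=
  ContinuousOn f (Set.Icc 0 a) ∧ f 0 = 0 ∧ f a = 0

/-- membership in `B*_a`: bridges whose maximum is attained at a unique point. -/
def IsBridgeStar (a : ℝ) (f : ℝ → ℝ) : Prop :=
  IsBridge a f ∧ ∃! s, s ∈ Set.Icc 0 a ∧ ∀ u ∈ Set.Icc 0 a, f u ≤ f s

/-- membership in `M_a`. -/
def IsMeander (a : ℝ) (f : ℝ → ℝ) : Prop :=
  ContinuousOn f (Set.Icc 0 a) ∧ f 0 = 0 ∧ ∀ s ∈ Set.Icc 0 a, f s ≤ f a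

/-- membership in `M*_a`. -/
def IsMeanderStar (a : ℝ) (f : ℝ → ℝ) : Prop :=
  ContinuousOn f (Set.Icc 0 a) ∧ f 0 = 0 ∧ rho a f = a

/-- The transformation `T^me_a`. -/
def Tme (a : ℝ) (f : ℝ → ℝ) : ℝ → ℝ := fun t =>
  if t ≤ rho a f then f t else f (rho a f) + f (a + rho a f - t)

/-- `γ_{f(a)/2}`: the first time in `[0,a]` at which `f` hits the level `f(a)/2`. -/
def gammaHalf (a : ℝ) (f : ℝ → ℝ) : ℝ := sInf {s | s ∈ Set.Icc 0 a ∧ f s = f a / 2}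

/-- The transformation `T^br_a`. -/
def Tbr (a : ℝ) (f : ℝ → ℝ) : ℝ → ℝ := fun t =>
  if t ≤ gammaHalf a f then f t else f (a + gammaHalf a f - t) - f (gammaHalf a f)

/-- The Brownian scaling map `S_b`. -/
def scaleMap (b : ℝ) (f : ℝ → ℝ) : ℝ → ℝ := fun t => (Real.sqrt b)⁻¹ * f (b * t)

/-- `m^br_t(w)` (for bridges of length `1`). -/
def mbr (f : ℝ → ℝ) (t : ℝ) : ℝ := if t ≤ rho 1 f then intervalMaxOn f 0 t else intervalMaxOn f t 1

/-- `g^br_t(w)`: left endpoint of the excursion of `m^br(w) - w` straddling `t`. -/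
def gbr (f : ℝ → ℝ) (t : ℝ) : ℝ := sSup {s | s ∈ Set.Icc 0 t ∧ mbr f s - f s = 0}

/-- `d^br_t(w)`: right endpoint of the excursion of `m^br(w) - w` straddling `t`,
with the convention `d^br_1(w) = 1`. -/
def dbr (f : ℝ → ℝ) (t : ℝ) : ℝ :=
  if t = 1 then 1 else sInf {s | s ∈ Set.Ioc t 1 ∧ mbr f s - f s = 0}

/-- `r^br_t(w)`: maximum of `m^br(w) - w` over the excursion interval. -/
def rbr (f : ℝ → ℝ) (t : ℝ) : ℝ :=
  sSup ((fun s => mbr f s - f s) '' Set.Icc (gbr f t) (dbr f t))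

/-- `u^br_t(w)`: Lebesgue time spent, up to time `t`, in non-excised excursions. -/
def ubr (f : ℝ → ℝ) (t : ℝ) : ℝ := ∫ s in (0:ℝ)..t, if rbr f s < mbr f s then (1:ℝ) else 0

/-- `α^br_s(w)`, with the convention `α^br_{u^br_1(w)}(w) = 1`. -/
def abr (f : ℝ → ℝ) (s : ℝ) : ℝ :=
  if s = ubr f 1 then 1 else sInf {t | t ∈ Set.Icc (0:ℝ) 1 ∧ s < ubr f t}

/-- `H^br(w)` (as a function; it is relevant on `[0, u^br_1(w)]`). -/
def Hbr (f : ℝ → ℝ) : ℝ → ℝ := fun t => f (abr f t)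

/-- `G^br(w)`. -/
def Gbr (f : ℝ → ℝ) : ℝ → ℝ := if 0 < ubr f 1 then scaleMap (ubr f 1) (Hbr f) else 0

/-- the past-maximum function `w̄`. -/
def pastMax (f : ℝ → ℝ) (t : ℝ) : ℝ := intervalMaxOn f 0 t

/-- `g^me_t(w)`. -/
def gme (f : ℝ → ℝ) (t : ℝ) : ℝ := sSup {s | s ∈ Set.Icc 0 t ∧ pastMax f s - f s = 0}

/-- `d^me_t(w)`, with the convention `d^me_1(w) = 1`. -/
def dme (f : ℝ → ℝ) (t : ℝ) : ℝ :=
  if t = 1 then 1 else sInf {s | s ∈ Set.Ioc t 1 ∧ pastMax f s - f s = 0}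

/-- `r^me_t(w)`. -/
def rme (f : ℝ → ℝ) (t : ℝ) : ℝ :=
  sSup ((fun s => pastMax f s - f s) '' Set.Icc (gme f t) (dme f t))

/-- `u^me_t(w)`. -/
def ume (f : ℝ → ℝ) (t : ℝ) : ℝ :=
  if t ≤ gammaHalf 1 f then ∫ s in (0:ℝ)..t, if rme f s < pastMax f s then (1:ℝ) else 0
  else (∫ s in (0:ℝ)..gammaHalf 1 f, if rme f s < pastMax f s then (1:ℝ) else 0) +
    ∫ s in gammaHalf 1 f..t, if rme f s < pastMax f s - f 1 / 2 then (1:ℝ) else 0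

/-- `α^me_s(w)`, with the convention `α^me_{u^me_1(w)}(w) = 1`. -/
def ame (f : ℝ → ℝ) (s : ℝ) : ℝ :=
  if s = ume f 1 then 1 else sInf {t | t ∈ Set.Icc (0:ℝ) 1 ∧ s < ume f t}

/-- `H^me(w)`. -/
def Hme (f : ℝ → ℝ) : ℝ → ℝ := fun t => f (ame f t)

/-- `G^me(w)`. -/
def Gme (f : ℝ → ℝ) : ℝ → ℝ := if 0 < ume f 1 then scaleMap (ume f 1) (Hme f) else 0

/-- Regularity property (i): uniqueness of one-sided maximizers at rational times. -/
def UniqueOneSidedMax (f : ℝ → ℝ) : Prop :=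
  ∀ t : ℚ, (t : ℝ) ∈ Set.Icc (0:ℝ) 1 →
    (∃! s, s ∈ Set.Icc (0:ℝ) (t:ℝ) ∧ ∀ u ∈ Set.Icc (0:ℝ) (t:ℝ), f u ≤ f s) ∧
    (∃! s, s ∈ Set.Icc ((t:ℝ)) 1 ∧ ∀ u ∈ Set.Icc ((t:ℝ)) 1, f u ≤ f s)

/-- Regularity property (ii): the level `0` is not a strict local minimum of `f` on `[0,1]`. -/
def NoStrictLocalMinAtZero (f : ℝ → ℝ) : Prop :=
  ¬ ∃ t ∈ Set.Icc (0:ℝ) 1, f t = 0 ∧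
      ∃ δ > 0, ∀ s ∈ Set.Icc (0:ℝ) 1, s ≠ t → |s - t| < δ → f t < f s

/-- `w ∈ B^reg_1`. -/
def Regular (f : ℝ → ℝ) : Prop :=
  IsBridge 1 f ∧ UniqueOneSidedMax f ∧ NoStrictLocalMinAtZero f

/-!
`g^br_t(w)` is the last zero before `t` of `m^br(w) - w`, which is continuous since running
maxima of a continuous function are continuous and the two branches defining `m^br(w)` agree
at `ρ(w)`, where `w` attains its maximum. So its zero set `Z` is closed and contains `0`.
For any closed `Z ∋ 0`, `t ↦ sup (Z ∩ [0,t])` is non-decreasing; it is right-continuous at `t`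
because either `t ∈ Z`, and then `t ≤ sup (Z ∩ [0,y]) ≤ y` for `y ≥ t`, or `t ∉ Z`, and then
`Z` misses a right neighbourhood of `t`, on which the function is constant.
-/

section LastVisit

variable {Z : Set ℝ} {a b t : ℝ}

lemma sSup_Icc_inter_mem_Icc (ha : a ∈ Z) (ht : a ≤ t) : sSup (Icc a t ∩ Z) ∈ Icc a t :=
  ⟨le_csSup (bddAbove_Icc.mono inter_subset_left) ⟨left_mem_Icc.2 ht, ha⟩,
    csSup_le ⟨a, left_mem_Icc.2 ht, ha⟩ fun _ hs => hs.1.2⟩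

lemma monotoneOn_sSup_Icc_inter (ha : a ∈ Z) :
    MonotoneOn (fun t => sSup (Icc a t ∩ Z)) (Ici a) := fun _ hs _ _ hst =>
  csSup_le_csSup (bddAbove_Icc.mono inter_subset_left) ⟨a, left_mem_Icc.2 hs, ha⟩
    (inter_subset_inter_left _ (Icc_subset_Icc_right hst))

lemma continuousWithinAt_sSup_Icc_inter (hZ : IsClosed (Icc a b ∩ Z)) (ha : a ∈ Z)
    (ht : t ∈ Icc a b) : ContinuousWithinAt (fun t => sSup (Icc a t ∩ Z)) (Icc t b) t := by
  by_cases htZ : t ∈ Z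
  · have hGt : sSup (Icc a t ∩ Z) = t :=
      le_antisymm (sSup_Icc_inter_mem_Icc ha ht.1).2
        (le_csSup (bddAbove_Icc.mono inter_subset_left) ⟨right_mem_Icc.2 ht.1, htZ⟩)
    rw [ContinuousWithinAt, hGt]
    refine tendsto_of_tendsto_of_tendsto_of_le_of_le' tendsto_const_nhds
      (tendsto_nhdsWithin_of_tendsto_nhds tendsto_id) ?_ ?_
    · filter_upwards [self_mem_nhdsWithin] with y hy
      rw [← hGt]
      exact monotoneOn_sSup_Icc_inter ha ht.1 (ht.1.trans hy.1) hy.1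
    · filter_upwards [self_mem_nhdsWithin] with y hy
      exact (sSup_Icc_inter_mem_Icc ha (ht.1.trans hy.1)).2
  · obtain ⟨u, htu, hu⟩ := exists_Ico_subset_of_mem_nhds
      (hZ.isOpen_compl.mem_nhds fun h => htZ h.2) ⟨t + 1, lt_add_one t⟩
    refine continuousWithinAt_const.congr_of_eventuallyEq ?_ rfl
    filter_upwards [inter_mem_nhdsWithin (Icc t b) (Iio_mem_nhds htu)] with y ⟨hy, hyu⟩
    congr 1
    ext s
    refine ⟨fun ⟨hs, hsZ⟩ => ⟨⟨hs.1, ?_⟩, hsZ⟩,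
      fun ⟨hs, hsZ⟩ => ⟨⟨hs.1, hs.2.trans hy.1⟩, hsZ⟩⟩
    by_contra! hts
    exact hu ⟨hts.le, hs.2.trans_lt hyu⟩ ⟨⟨hs.1, hs.2.trans hy.2⟩, hsZ⟩

end LastVisit

section RunningMax

variable {f : ℝ → ℝ} {a b c : ℝ}

lemma intervalMaxOn_eq_of_isMaxOn (hc : c ∈ Icc a b) (h : IsMaxOn f (Icc a b) c) :
    intervalMaxOn f a b = f c :=
  IsGreatest.csSup_eq ⟨mem_image_of_mem f hc, forall_mem_image.2 (isMaxOn_iff.1 h)⟩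

lemma continuousOn_intervalMaxOn_left (hab : a ≤ b) (hf : ContinuousOn f (Icc a b)) :
    ContinuousOn (fun t => intervalMaxOn f a t) (Icc a b) := by
  have hF : Continuous fun x => f (projIcc a b hab x) :=
    hf.comp_continuous (continuous_subtype_val.comp continuous_projIcc) fun x =>
      (projIcc a b hab x).2
  refine ((isCompact_Icc (a := a) (b := b)).continuous_sSup
    (f := fun t u => f (projIcc a b hab (min u t))) (hF.comp (continuous_snd.min continuous_fst))
    ).continuousOn.congr fun t ht => ?_
  refine congrArg sSup (ext fun y => ⟨?_, ?_⟩)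
  · rintro ⟨u, hu, rfl⟩
    have hu' : u ∈ Icc a b := ⟨hu.1, hu.2.trans ht.2⟩
    exact ⟨u, hu', by dsimp only; rw [min_eq_left hu.2, projIcc_of_mem hab hu']⟩
  · rintro ⟨u, hu, rfl⟩
    have hut : min u t ∈ Icc a b := ⟨le_min hu.1 ht.1, (min_le_right u t).trans ht.2⟩
    exact ⟨min u t, ⟨hut.1, min_le_right u t⟩, by dsimp only; rw [projIcc_of_mem hab hut]⟩

lemma continuousOn_intervalMaxOn_right (hab : a ≤ b) (hf : ContinuousOn f (Icc a b)) :
    ContinuousOn (fun t => intervalMaxOn f t b) (Icc a b) := by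
  have hF : Continuous fun x => f (projIcc a b hab x) :=
    hf.comp_continuous (continuous_subtype_val.comp continuous_projIcc) fun x =>
      (projIcc a b hab x).2
  refine ((isCompact_Icc (a := a) (b := b)).continuous_sSup
    (f := fun t u => f (projIcc a b hab (max u t))) (hF.comp (continuous_snd.max continuous_fst))
    ).continuousOn.congr fun t ht => ?_
  refine congrArg sSup (ext fun y => ⟨?_, ?_⟩)
  · rintro ⟨u, hu, rfl⟩
    have hu' : u ∈ Icc a b := ⟨ht.1.trans hu.1, hu.2⟩
    exact ⟨u, hu', by dsimp only; rw [max_eq_left hu.1, projIcc_of_mem hab hu']⟩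
  · rintro ⟨u, hu, rfl⟩
    have hut : max u t ∈ Icc a b := ⟨ht.1.trans (le_max_right u t), max_le hu.2 ht.2⟩
    exact ⟨max u t, ⟨le_max_right u t, hut.2⟩, by dsimp only; rw [projIcc_of_mem hab hut]⟩

end RunningMax

section Bridge

variable {f : ℝ → ℝ}

lemma rho_mem_Icc_isMaxOn {a : ℝ} (ha : 0 ≤ a) (hf : ContinuousOn f (Icc 0 a)) :
    rho a f ∈ Icc 0 a ∧ IsMaxOn f (Icc 0 a) (rho a f) := by
  obtain ⟨x, hx, hmax⟩ := isCompact_Icc.exists_isMaxOn (nonempty_Icc.2 ha) hf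
  have hS : IsClosed (Icc 0 a ∩ f ⁻¹' {intervalMaxOn f 0 a}) :=
    hf.preimage_isClosed_of_isClosed isClosed_Icc isClosed_singleton
  have hρ : rho a f ∈ Icc 0 a ∩ f ⁻¹' {intervalMaxOn f 0 a} :=
    hS.csInf_mem ⟨x, hx, (intervalMaxOn_eq_of_isMaxOn hx hmax).symm⟩ ⟨0, fun _ hs => hs.1.1⟩
  refine ⟨hρ.1, isMaxOn_iff.2 fun u hu => ?_⟩
  rw [show f (rho a f) = f x from hρ.2.trans (intervalMaxOn_eq_of_isMaxOn hx hmax)]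
  exact isMaxOn_iff.1 hmax u hu

lemma rho_nonneg {a : ℝ} : 0 ≤ rho a f :=
  Real.sInf_nonneg fun _ hs => hs.1.1

lemma mbr_zero : mbr f 0 = f 0 := by
  rw [mbr, if_pos rho_nonneg, intervalMaxOn, Icc_self, image_singleton, csSup_singleton]

lemma continuousOn_mbr (hf : ContinuousOn f (Icc 0 1)) : ContinuousOn (mbr f) (Icc 0 1) := by
  obtain ⟨hρ, hmax⟩ := rho_mem_Icc_isMaxOn zero_le_one hf
  have hL : intervalMaxOn f 0 (rho 1 f) = f (rho 1 f) :=
    intervalMaxOn_eq_of_isMaxOn ⟨hρ.1, le_rfl⟩ (hmax.on_subset (Icc_subset_Icc_right hρ.2))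
  have hR : intervalMaxOn f (rho 1 f) 1 = f (rho 1 f) :=
    intervalMaxOn_eq_of_isMaxOn ⟨le_rfl, hρ.2⟩ (hmax.on_subset (Icc_subset_Icc_left hρ.1))
  rw [← Icc_union_Icc_eq_Icc hρ.1 hρ.2]
  refine ContinuousOn.union_of_isClosed ?_ ?_ isClosed_Icc isClosed_Icc
  · exact ((continuousOn_intervalMaxOn_left zero_le_one hf).mono
      (Icc_subset_Icc_right hρ.2)).congr fun t ht => if_pos ht.2
  · refine ((continuousOn_intervalMaxOn_right zero_le_one hf).mono
      (Icc_subset_Icc_left hρ.1)).congr fun t ht => ?_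
    rcases ht.1.eq_or_lt with rfl | hlt
    · rw [mbr, if_pos le_rfl, hL]
      exact hR.symm
    · exact if_neg hlt.not_ge

end Bridge

/-- for a bridge `w`, the map `t ↦ g^br_t(w)` maps `[0,1]` into `[0,1]`,
is non-decreasing on `[0,1]`, and is right-continuous there. -/
theorem stmt5 (w : ℝ → ℝ) (hw : IsBridge 1 w) :
    (∀ t ∈ Set.Icc (0:ℝ) 1, gbr w t ∈ Set.Icc (0:ℝ) 1) ∧
    MonotoneOn (gbr w) (Set.Icc 0 1) ∧
    (∀ t ∈ Set.Icc (0:ℝ) 1, ContinuousWithinAt (gbr w) (Set.Icc t 1) t) := by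
  have hZ : IsClosed (Icc 0 1 ∩ {s | mbr w s - w s = 0}) :=
    ((continuousOn_mbr hw.1).sub hw.1).preimage_isClosed_of_isClosed isClosed_Icc
      isClosed_singleton
  have h0 : (0 : ℝ) ∈ {s | mbr w s - w s = 0} := sub_eq_zero.2 mbr_zero
  exact ⟨fun t ht => Icc_subset_Icc_right ht.2 (sSup_Icc_inter_mem_Icc h0 ht.1),
    (monotoneOn_sSup_Icc_inter h0).mono Icc_subset_Ici_self,
    fun t ht => continuousWithinAt_sSup_Icc_inter hZ h0 ht⟩
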